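/- The number of necklaces of length n and type i = (i_1,...,i_m) (with i_1+⋯+i_m = n) equals (1/n) * Σ_{d | gcd(i_1,...,i_m,n)} φ(d) * (n/d)! / ((i_1/d)! ⋯ (i_m/d)!). -/

import Mathlib

/-- Cyclic rotation on strings of length `n`: sends `(x₁,…,xₙ)` to `(x₂,…,xₙ,x₁)`. -/
def rot {m n : ℕ} (w : Fin n → Fin m) : Fin n → Fin m :=
  fun k => w ⟨(k.val + 1) % n, Nat.mod_lt _ k.pos⟩

/-- Rotation equivalence: `y ~ z` iff `σ^j(y) = z` for some `j`. -/
def rotRel {m n : ℕ} (y z : Fin n → Fin m) : Prop := ∃ j : ℕ, rot^[j] y = z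

/-!
Burnside's lemma for the rotation action of `Fin n` on strings of type `i` gives
`n · #necklaces = ∑_g #Fix(g)`. A string is fixed by the rotation `g` exactly when it is
`g`-periodic, i.e. factors through `Fin n ⧸ ⟨g⟩`; every letter count of such a string is a
multiple of `e = addOrderOf g`, so `Fix(g)` has `multinomial (i / e)` elements when `e` divides
every `i j` and is empty otherwise. In the cyclic group `Fin n` exactly `φ e` elements have
order `e` for each `e ∣ n`. Strings of a given type are counted by orbit–stabilizer for the
permutations of positions.
-/

open Finset Function MulAction
open scoped Nat

-- `(g +ᵥ w) k = w (-g +ᵥ k)`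
attribute [local instance] arrowAddAction

section Fibers

variable {α β : Type*}

theorem exists_perm_comp_eq_iff_card_fiber_eq [Finite α] (f g : α → β) :
    (∃ σ : Equiv.Perm α, g ∘ σ = f) ↔
      ∀ j, Nat.card {k // f k = j} = Nat.card {k // g k = j} := by
  constructor
  · rintro ⟨σ, rfl⟩ j
    exact Nat.card_congr (σ.subtypeEquiv fun _ => Iff.rfl)
  · intro h
    have e : ∀ j, {k // f k = j} ≃ {k // g k = j} := fun j => (Finite.card_eq.1 (h j)).some
    exact ⟨Equiv.ofFiberEquiv e, funext (Equiv.ofFiberEquiv_map e)⟩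

theorem exists_card_fiber_eq [Fintype α] [Fintype β] (c : β → ℕ)
    (hc : ∑ j, c j = Fintype.card α) :
    ∃ w : α → β, ∀ j, Nat.card {k // w k = j} = c j := by
  let e : (Σ j, Fin (c j)) ≃ α := Fintype.equivOfCardEq (by simp [hc])
  refine ⟨fun k => (e.symm k).1, fun j => ?_⟩
  have hfib : {k // (e.symm k).1 = j} ≃ {p : Σ j, Fin (c j) // p.1 = j} :=
    e.symm.subtypeEquiv fun _ => Iff.rfl
  rw [Nat.card_congr (hfib.trans (Equiv.sigmaSubtype j)), Nat.card_eq_fintype_card,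
    Fintype.card_fin]

theorem card_fun_card_fiber_eq [Fintype α] [Fintype β] (c : β → ℕ)
    (hc : ∑ j, c j = Fintype.card α) :
    Nat.card {w : α → β // ∀ j, Nat.card {k // w k = j} = c j} = Nat.multinomial univ c := by
  classical
  obtain ⟨w₀, hw₀⟩ := exists_card_fiber_eq c hc
  have horbit :
      orbit (Equiv.Perm α)ᵈᵐᵃ w₀ ≃ {w : α → β // ∀ j, Nat.card {k // w k = j} = c j} :=
    Equiv.subtypeEquivRight fun w => by
      simp_rw [← hw₀, ← exists_perm_comp_eq_iff_card_fiber_eq, mem_orbit_iff,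
        DomMulAct.mk.surjective.exists]
      rfl
  have hstab : Nat.card (stabilizer (Equiv.Perm α)ᵈᵐᵃ w₀) = ∏ j, (c j)! := by
    have e :
        stabilizer (Equiv.Perm α)ᵈᵐᵃ w₀ ≃ {σ : Equiv.Perm α // w₀ ∘ σ = w₀} :=
      DomMulAct.mk.symm.subtypeEquiv fun _ => Iff.rfl
    rw [Nat.card_congr e, Nat.card_eq_fintype_card, DomMulAct.stabilizer_card]
    simp_rw [← Nat.card_eq_fintype_card, hw₀]
  have hcount : Nat.card {w : α → β // ∀ j, Nat.card {k // w k = j} = c j} * ∏ j, (c j)! =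
      (∑ j, c j)! := by
    rw [← Nat.card_congr horbit, ← hstab, Nat.card_congr (orbitEquivQuotientStabilizer _ w₀),
      ← Subgroup.card_eq_card_quotient_mul_card_subgroup, Nat.card_congr DomMulAct.mk.symm,
      Nat.card_perm, hc, Nat.card_eq_fintype_card]
  rw [← Nat.multinomial_spec, mul_comm] at hcount
  exact Nat.eq_of_mul_eq_mul_left (prod_pos fun j _ => Nat.factorial_pos (c j)) hcount

theorem card_fun_mul_card_fiber_eq [Fintype α] [Fintype β] (c : β → ℕ) {e : ℕ}
    (he : 0 < e) (hc : ∑ j, c j = e * Fintype.card α) :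
    Nat.card {v : α → β // ∀ j, e * Nat.card {q // v q = j} = c j} =
      if ∀ j, e ∣ c j then Nat.multinomial univ (fun j => c j / e) else 0 := by
  split_ifs with hdvd
  · have hsum : ∑ j, c j / e = Fintype.card α := by
      refine Nat.eq_of_mul_eq_mul_left he ?_
      rw [mul_sum, ← hc]
      exact sum_congr rfl fun j _ => Nat.mul_div_cancel' (hdvd j)
    rw [← card_fun_card_fiber_eq _ hsum]
    refine Nat.card_congr (Equiv.subtypeEquivRight fun v => forall_congr' fun j => ?_)
    rw [Nat.eq_div_iff_mul_eq_left he.ne' (hdvd j), mul_comm, eq_comm]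
  · obtain ⟨j, hj⟩ := not_forall.1 hdvd
    have : IsEmpty {v : α → β // ∀ j, e * Nat.card {q // v q = j} = c j} :=
      ⟨fun v => hj ⟨_, (v.2 j).symm⟩⟩
    exact Nat.card_of_isEmpty

end Fibers

section Periodic

variable {G β : Type*} [AddGroup G]

def Function.periodicEquiv (g : G) :
    {w : G → β // Periodic w g} ≃ (G ⧸ AddSubgroup.zmultiples g → β) where
  toFun w := w.2.lift
  invFun v := ⟨v ∘ (↑), fun k => congrArg v (QuotientAddGroup.mk_add_of_mem k
    (AddSubgroup.mem_zmultiples g))⟩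
  left_inv _ := rfl
  right_inv _ := funext fun q => Quotient.inductionOn' q fun _ => rfl

theorem QuotientAddGroup.card_fiber_comp_mk (H : AddSubgroup G) (v : G ⧸ H → β) (j : β) :
    Nat.card {k : G // v k = j} = Nat.card H * Nat.card {q // v q = j} :=
  (Nat.card_congr (QuotientAddGroup.preimageMkEquivAddSubgroupProdSet H {q | v q = j})).trans
    (Nat.card_prod _ _)

end Periodic

section Translation

def fiberCardSubAddAction (G : Type*) {α β : Type*} [AddGroup G] [AddAction G α]
    (c : β → ℕ) : SubAddAction G (α → β) where
  carrier := {w | ∀ j, Nat.card {k // w k = j} = c j}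
  vadd_mem' g w hw j := by
    rw [← hw j]
    exact Nat.card_congr ((AddAction.toPerm (-g)).subtypeEquiv fun _ => Iff.rfl)

variable {G β : Type*} [AddCommGroup G]

theorem mem_fixedBy_fiberCardSubAddAction_iff {c : β → ℕ} {g : G}
    (x : fiberCardSubAddAction G (α := G) c) :
    x ∈ AddAction.fixedBy (fiberCardSubAddAction G c) g ↔ Periodic x.1 g := by
  rw [AddAction.mem_fixedBy, ← Subtype.val_inj, SubAddAction.val_vadd, funext_iff]
  show (∀ k, x.1 (-g + k) = x.1 k) ↔ _
  constructor
  · intro h k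
    rw [← h (k + g), neg_add_cancel_comm_assoc]
  · intro h k
    rw [add_comm]
    exact h.neg k

theorem card_fixedBy_fiberCardSubAddAction [Fintype G] [Fintype β]
    (c : β → ℕ) (hc : ∑ j, c j = Fintype.card G) (g : G) :
    Nat.card (AddAction.fixedBy (fiberCardSubAddAction G (α := G) c) g) =
      if ∀ j, addOrderOf g ∣ c j then Nat.multinomial univ (fun j => c j / addOrderOf g)
      else 0 := by
  classical
  let p := fiberCardSubAddAction G (α := G) c
  let H := AddSubgroup.zmultiples g
  have swap : {x : p // Periodic x.1 g} ≃ {w : {w : G → β // Periodic w g} // w.1 ∈ p} :=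
    { toFun x := ⟨⟨x.1.1, x.2⟩, x.1.2⟩
      invFun w := ⟨⟨w.1.1, w.2⟩, w.1.2⟩ }
  have e : AddAction.fixedBy p g ≃
      {v : G ⧸ H → β // ∀ j, addOrderOf g * Nat.card {q // v q = j} = c j} :=
    (Equiv.subtypeEquivRight mem_fixedBy_fiberCardSubAddAction_iff).trans <| swap.trans <|
      Equiv.subtypeEquiv (periodicEquiv g) fun w => forall_congr' fun j => by
        rw [← Nat.card_zmultiples, ← QuotientAddGroup.card_fiber_comp_mk]; rfl
  have hcH : ∑ j, c j = addOrderOf g * Fintype.card (G ⧸ H) := by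
    rw [hc, ← Nat.card_eq_fintype_card, ← Nat.card_eq_fintype_card,
      AddSubgroup.card_eq_card_quotient_mul_card_addSubgroup H, Nat.card_zmultiples, mul_comm]
  rw [Nat.card_congr e, card_fun_mul_card_fiber_eq c (addOrderOf_pos g) hcH]

end Translation

theorem Nat.filter_forall_dvd_divisors {ι : Type*} [Fintype ι] (i : ι → ℕ) {n : ℕ}
    (hn : n ≠ 0) :
    {d ∈ n.divisors | ∀ j, d ∣ i j} = (Nat.gcd (univ.gcd i) n).divisors := by
  ext d
  simp [Nat.dvd_gcd_iff, Finset.dvd_gcd_iff, hn, and_comm]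

theorem IsAddCyclic.sum_comp_addOrderOf {G M : Type*} [AddGroup G] [IsAddCyclic G] [Fintype G]
    [AddCommMonoid M] (f : ℕ → M) :
    ∑ g : G, f (addOrderOf g) = ∑ d ∈ (Fintype.card G).divisors, d.totient • f d := by
  classical
  rw [← sum_fiberwise_of_maps_to (g := addOrderOf) (t := (Fintype.card G).divisors)
    fun g _ => Nat.mem_divisors.2 ⟨addOrderOf_dvd_card, Fintype.card_ne_zero⟩]
  refine sum_congr rfl fun d hd => ?_
  rw [sum_congr rfl fun g hg => congrArg f (mem_filter.1 hg).2, sum_const,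
    IsAddCyclic.card_addOrderOf_eq_totient (Nat.dvd_of_mem_divisors hd)]

theorem IsAddCyclic.sum_ite_forall_addOrderOf_dvd {G β : Type*} [AddGroup G] [IsAddCyclic G]
    [Fintype G] [Fintype β] (c : β → ℕ) (f : ℕ → ℕ) :
    ∑ g : G, (if ∀ j, addOrderOf g ∣ c j then f (addOrderOf g) else 0) =
      ∑ d ∈ (Nat.gcd (univ.gcd c) (Fintype.card G)).divisors, d.totient * f d := by
  rw [sum_comp_addOrderOf fun d => if ∀ j, d ∣ c j then f d else 0]
  simp_rw [smul_ite, smul_zero, ← sum_filter,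
    Nat.filter_forall_dvd_divisors c Fintype.card_ne_zero, smul_eq_mul]

theorem Fin.val_nsmul_one {n : ℕ} [NeZero n] (j : ℕ) : (j • (1 : Fin n)).val = j % n := by
  induction j with
  | zero => simp
  | succ j ih => rw [succ_nsmul, Fin.val_add, ih, Fin.val_one', ← Nat.add_mod]

theorem Fin.val_nsmul_one_eq_self {n : ℕ} [NeZero n] (g : Fin n) : g.val • (1 : Fin n) = g :=
  Fin.ext ((Fin.val_nsmul_one _).trans (Nat.mod_eq_of_lt g.isLt))

instance {n : ℕ} [NeZero n] : IsAddCyclic (Fin n) :=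
  ⟨⟨1, fun g => ⟨g.val, (natCast_zsmul 1 g.val).trans (Fin.val_nsmul_one_eq_self g)⟩⟩⟩

section Necklace

variable {m n : ℕ} [NeZero n]

theorem rot_eq_neg_one_vadd (w : Fin n → Fin m) : rot w = (-1 : Fin n) +ᵥ w := by
  funext k
  show w _ = w (-(-1) + k)
  rw [neg_neg]
  exact congrArg w (Fin.ext (by simp [Fin.val_add, add_comm]))

theorem rotRel_iff_mem_orbit (y z : Fin n → Fin m) :
    rotRel y z ↔ z ∈ AddAction.orbit (Fin n) y := by
  have hiter : ∀ j : ℕ, rot^[j] y = -(j • 1 : Fin n) +ᵥ y := fun j => by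
    rw [show rot = ((-1 : Fin n) +ᵥ · : (Fin n → Fin m) → _) from funext rot_eq_neg_one_vadd,
      vadd_iterate, smul_neg]
  simp only [rotRel, hiter, AddAction.mem_orbit_iff]
  constructor
  · rintro ⟨j, h⟩
    exact ⟨_, h⟩
  · rintro ⟨g, rfl⟩
    exact ⟨(-g).val, by rw [Fin.val_nsmul_one_eq_self, neg_neg]⟩

theorem card_quot_rotRel_eq_card_orbits (i : Fin m → ℕ) :
    Nat.card (Quot fun y z : {w : Fin n → Fin m // ∀ j, Nat.card {k // w k = j} = i j} =>
        rotRel y.1 z.1) =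
      Nat.card (Quotient
        (AddAction.orbitRel (Fin n) (fiberCardSubAddAction (Fin n) (α := Fin n) i))) :=
  Nat.card_congr <| Quot.congrRight fun y z =>
    (rotRel_iff_mem_orbit y.1 z.1).trans <| AddAction.mem_orbit_symm.trans
      (SubAddAction.mem_orbit_subAdd_iff (p := fiberCardSubAddAction (Fin n) i) (x := y)
        (m := z)).symm

end Necklace

/-- The number of necklaces of length `n` and type `i` equals
`(1/n) * ∑_{d ∣ gcd(i₁,…,i_m,n)} φ(d) * (n/d)! / ((i₁/d)! ⋯ (i_m/d)!)`
(stated multiplied through by `n`). -/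
theorem necklace_count_of_type (m n : ℕ) (hn : 0 < n) (i : Fin m → ℕ)
    (hi : ∑ j, i j = n) :
    n * Nat.card (Quot (fun y z :
        {w : Fin n → Fin m // ∀ j, Nat.card {k : Fin n // w k = j} = i j} =>
        rotRel y.1 z.1)) =
      ∑ d ∈ (Nat.gcd (Finset.univ.gcd i) n).divisors,
        Nat.totient d * Nat.multinomial Finset.univ (fun j => i j / d) := by
  classical
  have : NeZero n := ⟨hn.ne'⟩
  have hcard : ∑ j, i j = Fintype.card (Fin n) := hi.trans (Fintype.card_fin n).symm
  have burnside := AddAction.sum_card_fixedBy_eq_card_orbits_mul_card_addGroup (Fin n)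
    (fiberCardSubAddAction (Fin n) (α := Fin n) i)
  rw [Fintype.card_fin] at burnside
  rw [card_quot_rotRel_eq_card_orbits, Nat.card_eq_fintype_card, mul_comm, ← burnside]
  simp only [← Nat.card_eq_fintype_card, card_fixedBy_fiberCardSubAddAction i hcard]
  rw [IsAddCyclic.sum_ite_forall_addOrderOf_dvd i fun e => Nat.multinomial univ fun j => i j / e,
    Fintype.card_fin]
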